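/- Let u : ℝ² × [0,T] → ℝ solve the two-dimensional heat equation ∂u/∂t = ∂²u/∂x² + ∂²u/∂y² on Ω × (0,T], and suppose all spatial partial derivatives of u of order up to 6 are continuous and bounded on a neighborhood of Ω̄ × [0,T]. For h > 0 define the shift differences δ²ₓv(x,y,t) = v(x-h,y,t) − 2v(x,y,t) + v(x+h,y,t) and δ²ᵧv(x,y,t) = v(x,y-h,t) − 2v(x,y,t) + v(x,y+h,t). Then there exists C ≥ 0, depending only on the suprema of the spatial derivatives of u of order up to 6, such that at every point (x,y,t) whose h-neighborhood in space lies in Ω: | (1 + δ²ₓ/12 + δ²ᵧ/12)(∂u/∂t)(x,y,t) − (1/h²)·(1 + δ²ᵧ/12)(δ²ₓ u)(x,y,t) − (1/h²)·(1 + δ²ₓ/12)(δ²ᵧ u)(x,y,t) | ≤ C·h⁴. -/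

import Mathlib

/-!
Fix the time `t` and write `U = u(·, ·, t)`. Taylor expansion of a second difference in one
variable gives `δ²ₓU = h² Uₓₓ + (h⁴/12) Uₓₓₓₓ + O(h⁶)`, `δ²ₓUₓₓ = h² Uₓₓₓₓ + O(h⁴)` and
`δ²ᵧUₓₓₓₓ = O(h²)`, and symmetrically in `y`. After replacing `∂u/∂t` by `Uₓₓ + Uᵧᵧ` at the five
stencil points, the terms of order `h⁰` and `h²` cancel (this is what the weights `1/12` are
chosen for), and what remains is a combination of the defects of these expansions, of size
`O(h⁴)`. The one genuinely two-dimensional input is the symmetry of mixed partial derivatives,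
which turns the bound on `∂ₓ⁴∂ᵧ²U` into one on `∂ᵧ²∂ₓ⁴U`.
-/

/-- Central second difference with step `h` in the first (x) variable of a
function of two real variables. -/
def deltaX (h : ℝ) (v : ℝ → ℝ → ℝ) (x y : ℝ) : ℝ :=
  v (x - h) y - 2 * v x y + v (x + h) y

/-- Central second difference with step `h` in the second (y) variable of a
function of two real variables. -/
def deltaY (h : ℝ) (v : ℝ → ℝ → ℝ) (x y : ℝ) : ℝ :=
  v x (y - h) - 2 * v x y + v x (y + h)

open Set Function
open scoped Nat

theorem iteratedDeriv_iteratedDeriv {𝕜 F : Type*} [NontriviallyNormedField 𝕜]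
    [NormedAddCommGroup F] [NormedSpace 𝕜 F] (m n : ℕ) (f : 𝕜 → F) :
    iteratedDeriv m (iteratedDeriv n f) = iteratedDeriv (m + n) f := by
  simp only [iteratedDeriv_eq_iterate, iterate_add]
  rfl

section SecondDifference

def secondDiff (h : ℝ) (f : ℝ → ℝ) (x : ℝ) : ℝ := f (x - h) - 2 * f x + f (x + h)

variable {f : ℝ → ℝ} {x h B : ℝ}

theorem abs_sub_sum_iteratedDeriv_le {n : ℕ} (hf : ContDiff ℝ (n + 1) f) {x₀ : ℝ}
    (hB : ∀ ξ ∈ uIcc x₀ x, |iteratedDeriv (n + 1) f ξ| ≤ B) :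
    |f x - ∑ k ∈ Finset.range (n + 1), iteratedDeriv k f x₀ / k ! * (x - x₀) ^ k|
      ≤ B * |x - x₀| ^ (n + 1) / (n + 1)! := by
  rcases eq_or_ne x₀ x with rfl | hx
  · simp [Finset.sum_range_succ']
  obtain ⟨ξ, hξ, hrem⟩ := taylor_mean_remainder_lagrange_iteratedDeriv hx hf.contDiffOn
  have htaylor : taylorWithinEval f n (uIcc x₀ x) x₀ x
      = ∑ k ∈ Finset.range (n + 1), iteratedDeriv k f x₀ / k ! * (x - x₀) ^ k := by
    rw [taylor_within_apply]
    refine Finset.sum_congr rfl fun k hk => ?_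
    rw [iteratedDerivWithin_eq_iteratedDeriv (uniqueDiffOn_uIcc hx)
      (hf.contDiffAt.of_le ?_) left_mem_uIcc, smul_eq_mul]
    · ring
    · have := Finset.mem_range.mp hk
      exact_mod_cast (by omega : k ≤ n + 1)
  rw [← htaylor, hrem, abs_div, abs_mul, abs_pow, Nat.abs_cast]
  gcongr
  exact hB ξ (uIoo_subset_uIcc_self hξ)

theorem abs_add_sub_sum_iteratedDeriv_le {n : ℕ} (hf : ContDiff ℝ (n + 1) f) (hh : 0 ≤ h)
    (hB : ∀ ξ ∈ Icc (x - h) (x + h), |iteratedDeriv (n + 1) f ξ| ≤ B) :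
    |f (x - h) + f (x + h)
        - ∑ k ∈ Finset.range (n + 1), iteratedDeriv k f x / k ! * ((-h) ^ k + h ^ k)|
      ≤ 2 * (B * h ^ (n + 1) / (n + 1)!) := by
  have hsub : ∀ y ∈ Icc (x - h) (x + h), uIcc x y ⊆ Icc (x - h) (x + h) := fun y hy =>
    uIcc_subset_Icc ⟨by linarith, by linarith⟩ hy
  have hleft := abs_sub_sum_iteratedDeriv_le hf fun ξ hξ =>
    hB ξ (hsub (x - h) ⟨le_rfl, by linarith⟩ hξ)
  have hright := abs_sub_sum_iteratedDeriv_le hf fun ξ hξ =>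
    hB ξ (hsub (x + h) ⟨by linarith, le_rfl⟩ hξ)
  rw [sub_sub_cancel_left, abs_neg, abs_of_nonneg hh] at hleft
  rw [add_sub_cancel_left, abs_of_nonneg hh] at hright
  calc _ = |(f (x - h) - ∑ k ∈ Finset.range (n + 1), iteratedDeriv k f x / k ! * (-h) ^ k)
        + (f (x + h) - ∑ k ∈ Finset.range (n + 1), iteratedDeriv k f x / k ! * h ^ k)| := by
          simp only [mul_add, Finset.sum_add_distrib]
          ring_nf
    _ ≤ _ := (abs_add_le _ _).trans (by linarith)

theorem abs_secondDiff_le_four_mul (hh : 0 ≤ h) (hf : ∀ ξ ∈ Icc (x - h) (x + h), |f ξ| ≤ B) :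
    |secondDiff h f x| ≤ 4 * B := by
  have hl := abs_le.mp (hf (x - h) ⟨le_rfl, by linarith⟩)
  have hc := abs_le.mp (hf x ⟨by linarith, by linarith⟩)
  have hr := abs_le.mp (hf (x + h) ⟨by linarith, le_rfl⟩)
  rw [secondDiff, abs_le]
  constructor <;> linarith

theorem abs_secondDiff_le (hf : ContDiff ℝ 2 f) (hh : 0 ≤ h)
    (hB : ∀ ξ ∈ Icc (x - h) (x + h), |iteratedDeriv 2 f ξ| ≤ B) :
    |secondDiff h f x| ≤ B * h ^ 2 := by
  convert abs_add_sub_sum_iteratedDeriv_le (n := 1) hf hh hB using 1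
  · congr 1
    simp only [secondDiff, Finset.sum_range_succ, Finset.sum_range_zero, iteratedDeriv_zero,
      iteratedDeriv_one, Nat.factorial]
    push_cast
    ring
  · simp only [Nat.factorial]
    push_cast
    ring

theorem abs_secondDiff_sub_le (hf : ContDiff ℝ 4 f) (hh : 0 ≤ h)
    (hB : ∀ ξ ∈ Icc (x - h) (x + h), |iteratedDeriv 4 f ξ| ≤ B) :
    |secondDiff h f x - h ^ 2 * iteratedDeriv 2 f x| ≤ B * h ^ 4 / 12 := by
  convert abs_add_sub_sum_iteratedDeriv_le (n := 3) hf hh hB using 1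
  · congr 1
    simp only [secondDiff, Finset.sum_range_succ, Finset.sum_range_zero, iteratedDeriv_zero,
      iteratedDeriv_one, Nat.factorial]
    push_cast
    ring
  · simp only [Nat.factorial]
    push_cast
    ring

theorem abs_secondDiff_sub_sub_le (hf : ContDiff ℝ 6 f) (hh : 0 ≤ h)
    (hB : ∀ ξ ∈ Icc (x - h) (x + h), |iteratedDeriv 6 f ξ| ≤ B) :
    |secondDiff h f x - h ^ 2 * iteratedDeriv 2 f x - h ^ 4 / 12 * iteratedDeriv 4 f x|
      ≤ B * h ^ 6 / 360 := by
  convert abs_add_sub_sum_iteratedDeriv_le (n := 5) hf hh hB using 1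
  · congr 1
    simp only [secondDiff, Finset.sum_range_succ, Finset.sum_range_zero, iteratedDeriv_zero,
      iteratedDeriv_one, Nat.factorial]
    push_cast
    ring
  · simp only [Nat.factorial]
    push_cast
    ring

theorem abs_secondDiff_iteratedDeriv_two_sub_le (hf : ContDiff ℝ 6 f) (hh : 0 ≤ h)
    (hB : ∀ ξ ∈ Icc (x - h) (x + h), |iteratedDeriv 6 f ξ| ≤ B) :
    |secondDiff h (iteratedDeriv 2 f) x - h ^ 2 * iteratedDeriv 4 f x| ≤ B * h ^ 4 / 12 := by
  have hf₂ : ContDiff ℝ 4 (iteratedDeriv 2 f) := by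
    rw [iteratedDeriv_eq_iterate]
    exact hf.iterate_deriv' 4 2
  simpa only [iteratedDeriv_iteratedDeriv] using
    abs_secondDiff_sub_le hf₂ hh (by simpa only [iteratedDeriv_iteratedDeriv] using hB)

end SecondDifference
section PartialDeriv

variable {E G : Type*} [NormedAddCommGroup E] [NormedSpace ℝ E]
  [NormedAddCommGroup G] [NormedSpace ℝ G]

noncomputable def partialDeriv (v : E) (F : E → G) : E → G := fun z => fderiv ℝ F z v

variable {F : E → G}

theorem ContDiff.partialDeriv {n : ℕ} (hF : ContDiff ℝ (n + 1) F) (v : E) :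
    ContDiff ℝ n (_root_.partialDeriv v F) :=
  (hF.fderiv_right le_rfl).clm_apply contDiff_const

theorem ContDiff.iterate_partialDeriv {n i : ℕ} (hF : ContDiff ℝ (n + i : ℕ) F) (v : E) :
    ContDiff ℝ n ((_root_.partialDeriv v)^[i] F) := by
  induction i generalizing F with
  | zero => exact hF
  | succ i ih =>
    rw [iterate_succ_apply]
    exact ih (ContDiff.partialDeriv (by exact_mod_cast hF) v)

theorem partialDeriv_comm (hF : ContDiff ℝ 2 F) (v w : E) :
    partialDeriv v (partialDeriv w F) = partialDeriv w (partialDeriv v F) := by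
  funext z
  have hd : DifferentiableAt ℝ (fderiv ℝ F) z :=
    (hF.fderiv_right (m := 1) (by norm_num)).differentiable one_ne_zero z
  have hsecond : ∀ a b, partialDeriv a (partialDeriv b F) z = fderiv ℝ (fderiv ℝ F) z a b :=
    fun a b => by
      change fderiv ℝ (fun y => fderiv ℝ F y b) z a = _
      simp [fderiv_clm_apply hd (differentiableAt_const b)]
  rw [hsecond, hsecond]
  exact hF.contDiffAt.isSymmSndFDerivAt (by simp) v w

theorem partialDeriv_iterate_comm {i : ℕ} (hF : ContDiff ℝ (i + 1 : ℕ) F) (v w : E) :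
    partialDeriv w ((partialDeriv v)^[i] F) = (partialDeriv v)^[i] (partialDeriv w F) := by
  induction i generalizing F with
  | zero => rfl
  | succ i ih =>
    rw [iterate_succ_apply, iterate_succ_apply,
      ih (ContDiff.partialDeriv (by exact_mod_cast hF) v),
      partialDeriv_comm (hF.of_le (by norm_cast; omega))]

theorem iterate_partialDeriv_comm {i j : ℕ} (hF : ContDiff ℝ (i + j : ℕ) F) (v w : E) :
    (partialDeriv w)^[j] ((partialDeriv v)^[i] F)
      = (partialDeriv v)^[i] ((partialDeriv w)^[j] F) := by
  induction j generalizing F with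
  | zero => rfl
  | succ j ih =>
    rw [iterate_succ_apply, iterate_succ_apply,
      partialDeriv_iterate_comm (hF.of_le (by norm_cast; omega)),
      ih (ContDiff.partialDeriv (by exact_mod_cast hF) w)]

theorem iteratedDeriv_comp_add_smul {n : ℕ} (hF : ContDiff ℝ n F) (z v : E) :
    iteratedDeriv n (fun s : ℝ => F (z + s • v)) = fun s => (partialDeriv v)^[n] F (z + s • v) := by
  induction n generalizing F with
  | zero => simp
  | succ n ih =>
    have hderiv : deriv (fun s : ℝ => F (z + s • v)) = fun s => partialDeriv v F (z + s • v) := by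
      funext s
      have hline : HasDerivAt (fun s : ℝ => z + s • v) v s := by
        simpa using ((hasDerivAt_id s).smul_const v).const_add z
      exact ((hF.differentiable (by simp) _).hasFDerivAt.comp_hasDerivAt s hline).deriv
    rw [iteratedDeriv_succ', hderiv, ih (ContDiff.partialDeriv (by exact_mod_cast hF) v)]
    rfl

theorem ContDiff.uncurry_left {E' : Type*} [NormedAddCommGroup E'] [NormedSpace ℝ E']
    {W : E → E' → G} {n : WithTop ℕ∞} (x : E)
    (hW : ContDiff ℝ n (uncurry W)) : ContDiff ℝ n (W x) :=
  hW.comp (contDiff_prodMk_right x)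

theorem ContDiff.uncurry_right {E' : Type*} [NormedAddCommGroup E'] [NormedSpace ℝ E']
    {W : E → E' → G} {n : WithTop ℕ∞} (y : E')
    (hW : ContDiff ℝ n (uncurry W)) : ContDiff ℝ n fun x => W x y :=
  hW.comp (contDiff_prodMk_left y)

end PartialDeriv

section Curried

noncomputable def iteratedDerivX (n : ℕ) (U : ℝ → ℝ → ℝ) (x y : ℝ) : ℝ :=
  iteratedDeriv n (fun p => U p y) x

noncomputable def iteratedDerivY (n : ℕ) (U : ℝ → ℝ → ℝ) (x y : ℝ) : ℝ :=
  iteratedDeriv n (U x) y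

variable {U : ℝ → ℝ → ℝ}

theorem uncurry_iteratedDerivX {n : ℕ} (hU : ContDiff ℝ n (uncurry U)) :
    uncurry (iteratedDerivX n U) = (partialDeriv ((1 : ℝ), (0 : ℝ)))^[n] (uncurry U) := by
  funext ⟨x, y⟩
  simpa [iteratedDerivX] using congrFun (iteratedDeriv_comp_add_smul hU ((0 : ℝ), y) (1, 0)) x

theorem uncurry_iteratedDerivY {n : ℕ} (hU : ContDiff ℝ n (uncurry U)) :
    uncurry (iteratedDerivY n U) = (partialDeriv ((0 : ℝ), (1 : ℝ)))^[n] (uncurry U) := by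
  funext ⟨x, y⟩
  simpa [iteratedDerivY] using congrFun (iteratedDeriv_comp_add_smul hU (x, (0 : ℝ)) (0, 1)) y

theorem ContDiff.uncurry_iteratedDerivX {n j : ℕ} (hU : ContDiff ℝ (n + j : ℕ) (uncurry U)) :
    ContDiff ℝ n (uncurry (iteratedDerivX j U)) := by
  rw [_root_.uncurry_iteratedDerivX (hU.of_le (by norm_cast; omega))]
  exact hU.iterate_partialDeriv _

theorem ContDiff.uncurry_iteratedDerivY {n j : ℕ} (hU : ContDiff ℝ (n + j : ℕ) (uncurry U)) :
    ContDiff ℝ n (uncurry (iteratedDerivY j U)) := by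
  rw [_root_.uncurry_iteratedDerivY (hU.of_le (by norm_cast; omega))]
  exact hU.iterate_partialDeriv _

theorem iteratedDerivY_iteratedDerivX_comm {i j : ℕ} (hU : ContDiff ℝ (i + j : ℕ) (uncurry U)) :
    iteratedDerivY j (iteratedDerivX i U) = iteratedDerivX i (iteratedDerivY j U) := by
  apply uncurry_injective
  rw [uncurry_iteratedDerivY
      (ContDiff.uncurry_iteratedDerivX (n := j) (j := i) (by rwa [add_comm])),
    uncurry_iteratedDerivX (hU.uncurry_iteratedDerivY (n := i)),
    uncurry_iteratedDerivX (hU.of_le (by norm_cast; omega)),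
    uncurry_iteratedDerivY (hU.of_le (by norm_cast; omega)), iterate_partialDeriv_comm hU]

end Curried

section TruncationError

/-- `V` stands for `∂u/∂t` and `U` for `u`, both at a fixed time. -/
noncomputable def compactTruncationError (h : ℝ) (V U : ℝ → ℝ → ℝ) (x y : ℝ) : ℝ :=
  (V x y + (1 / 12) * deltaX h V x y + (1 / 12) * deltaY h V x y)
    - (1 / h ^ 2) * (deltaX h U x y + (1 / 12) * deltaY h (deltaX h U) x y)
    - (1 / h ^ 2) * (deltaY h U x y + (1 / 12) * deltaX h (deltaY h U) x y)

variable {h x y B : ℝ}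

theorem compactTruncationError_congr (hh : 0 ≤ h) {V V' U : ℝ → ℝ → ℝ}
    (hV : ∀ p ∈ Icc (x - h) (x + h), ∀ q ∈ Icc (y - h) (y + h), V p q = V' p q) :
    compactTruncationError h V U x y = compactTruncationError h V' U x y := by
  have hstencil : ∀ z : ℝ, z - h ∈ Icc (z - h) (z + h) ∧ z ∈ Icc (z - h) (z + h)
      ∧ z + h ∈ Icc (z - h) (z + h) := fun z =>
    ⟨⟨le_rfl, by linarith⟩, ⟨by linarith, by linarith⟩, ⟨by linarith, le_rfl⟩⟩
  obtain ⟨hxl, hx, hxr⟩ := hstencil x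
  obtain ⟨hyl, hy, hyr⟩ := hstencil y
  simp only [compactTruncationError, deltaX, deltaY, hV _ hxl _ hy, hV _ hx _ hyl, hV _ hx _ hy,
    hV _ hxr _ hy, hV _ hx _ hyr]

theorem compactTruncationError_add_eq (hh : h ≠ 0) {U P Q P₄ Q₄ R₁ R₂ : ℝ → ℝ → ℝ}
    (hR₁ : ∀ p q, deltaX h U p q = h ^ 2 * P p q + h ^ 4 / 12 * P₄ p q + R₁ p q)
    (hR₂ : ∀ p q, deltaY h U p q = h ^ 2 * Q p q + h ^ 4 / 12 * Q₄ p q + R₂ p q) :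
    compactTruncationError h (fun p q => P p q + Q p q) U x y
      = (deltaX h P x y - h ^ 2 * P₄ x y + (deltaY h Q x y - h ^ 2 * Q₄ x y)) / 12
        - h ^ 2 / 144 * (deltaY h P₄ x y + deltaX h Q₄ x y)
        - (R₁ x y + R₂ x y + (deltaY h R₁ x y + deltaX h R₂ x y) / 12) / h ^ 2 := by
  have hyx : deltaY h (deltaX h U) x y
      = h ^ 2 * deltaY h P x y + h ^ 4 / 12 * deltaY h P₄ x y + deltaY h R₁ x y := by
    simp only [deltaY, hR₁]
    ring
  have hxy : deltaX h (deltaY h U) x y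
      = h ^ 2 * deltaX h Q x y + h ^ 4 / 12 * deltaX h Q₄ x y + deltaX h R₂ x y := by
    simp only [deltaX, hR₂]
    ring
  rw [compactTruncationError, hyx, hxy, hR₁, hR₂]
  simp only [deltaX, deltaY]
  field_simp
  ring

theorem abs_compactTruncationError_le_of_expansions (hh : 0 < h) {U P Q P₄ Q₄ R₁ R₂ : ℝ → ℝ → ℝ}
    (hR₁ : ∀ p q, deltaX h U p q = h ^ 2 * P p q + h ^ 4 / 12 * P₄ p q + R₁ p q)
    (hR₂ : ∀ p q, deltaY h U p q = h ^ 2 * Q p q + h ^ 4 / 12 * Q₄ p q + R₂ p q)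
    (hP : |deltaX h P x y - h ^ 2 * P₄ x y| ≤ B * h ^ 4 / 12)
    (hQ : |deltaY h Q x y - h ^ 2 * Q₄ x y| ≤ B * h ^ 4 / 12)
    (hP₄ : |deltaY h P₄ x y| ≤ B * h ^ 2) (hQ₄ : |deltaX h Q₄ x y| ≤ B * h ^ 2)
    (hr₁ : ∀ q ∈ Icc (y - h) (y + h), |R₁ x q| ≤ B * h ^ 6 / 360)
    (hr₂ : ∀ p ∈ Icc (x - h) (x + h), |R₂ p y| ≤ B * h ^ 6 / 360) :
    |compactTruncationError h (fun p q => P p q + Q p q) U x y| ≤ B * h ^ 4 := by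
  have hd₁ : |deltaY h R₁ x y| ≤ 4 * (B * h ^ 6 / 360) := abs_secondDiff_le_four_mul hh.le hr₁
  have hd₂ : |deltaX h R₂ x y| ≤ 4 * (B * h ^ 6 / 360) :=
    abs_secondDiff_le_four_mul (f := fun p => R₂ p y) hh.le hr₂
  have hBh : 0 ≤ B * h ^ 4 := by linarith [abs_nonneg (deltaX h P x y - h ^ 2 * P₄ x y)]
  rw [compactTruncationError_add_eq hh.ne' hR₁ hR₂]
  calc _ ≤ |deltaX h P x y - h ^ 2 * P₄ x y + (deltaY h Q x y - h ^ 2 * Q₄ x y)| / 12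
        + h ^ 2 / 144 * |deltaY h P₄ x y + deltaX h Q₄ x y|
        + |R₁ x y + R₂ x y + (deltaY h R₁ x y + deltaX h R₂ x y) / 12| / h ^ 2 := by
        refine (abs_sub _ _).trans (add_le_add ((abs_sub _ _).trans (le_of_eq ?_)) (le_of_eq ?_))
        · rw [abs_div, abs_mul, abs_of_pos (by positivity : (0 : ℝ) < h ^ 2 / 144)]
          norm_num
        · rw [abs_div, abs_of_pos (by positivity : (0 : ℝ) < h ^ 2)]
    _ ≤ (B * h ^ 4 / 12 + B * h ^ 4 / 12) / 12 + h ^ 2 / 144 * (B * h ^ 2 + B * h ^ 2)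
          + (B * h ^ 6 / 360 + B * h ^ 6 / 360
            + (4 * (B * h ^ 6 / 360) + 4 * (B * h ^ 6 / 360)) / 12) / h ^ 2 := by
        gcongr
        · exact (abs_add_le _ _).trans (add_le_add hP hQ)
        · exact (abs_add_le _ _).trans (add_le_add hP₄ hQ₄)
        · refine (abs_add_three _ _ _).trans (add_le_add (add_le_add
            (hr₁ y ⟨by linarith, by linarith⟩) (hr₂ x ⟨by linarith, by linarith⟩)) ?_)
          rw [abs_div, abs_of_pos (by norm_num : (0 : ℝ) < 12)]
          gcongr
          exact (abs_add_le _ _).trans (add_le_add hd₁ hd₂)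
    _ = 19 / 540 * (B * h ^ 4) := by
        field_simp
        ring
    _ ≤ B * h ^ 4 := by linarith

theorem abs_compactTruncationError_le {U : ℝ → ℝ → ℝ} (hU : ContDiff ℝ 6 (uncurry U)) (hh : 0 < h)
    (hB : ∀ i j, i + j = 6 → ∀ p ∈ Icc (x - h) (x + h), ∀ q ∈ Icc (y - h) (y + h),
      |iteratedDerivX i (iteratedDerivY j U) p q| ≤ B) :
    |compactTruncationError h (fun p q => iteratedDerivX 2 U p q + iteratedDerivY 2 U p q) U x y|
      ≤ B * h ^ 4 := by
  have hx : x ∈ Icc (x - h) (x + h) := ⟨by linarith, by linarith⟩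
  have hy : y ∈ Icc (y - h) (y + h) := ⟨by linarith, by linarith⟩
  have hU' : ∀ n : ℕ, n ≤ 6 → ContDiff ℝ n (uncurry U) := fun n hn =>
    hU.of_le (by exact_mod_cast hn)
  have hmixed : ∀ q, iteratedDerivY 2 (iteratedDerivX 4 U) x q
      = iteratedDerivX 4 (iteratedDerivY 2 U) x q := fun q => by
    rw [iteratedDerivY_iteratedDerivX_comm (hU' _ (by norm_num))]
  have hX₄ : ContDiff ℝ 2 (uncurry (iteratedDerivX 4 U)) := by
    exact_mod_cast ContDiff.uncurry_iteratedDerivX (n := 2) (hU' _ le_rfl)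
  have hY₄ : ContDiff ℝ 2 (uncurry (iteratedDerivY 4 U)) := by
    exact_mod_cast ContDiff.uncurry_iteratedDerivY (n := 2) (hU' _ le_rfl)
  refine abs_compactTruncationError_le_of_expansions hh
    (P₄ := iteratedDerivX 4 U) (Q₄ := iteratedDerivY 4 U)
    (R₁ := fun p q => deltaX h U p q - h ^ 2 * iteratedDerivX 2 U p q
      - h ^ 4 / 12 * iteratedDerivX 4 U p q)
    (R₂ := fun p q => deltaY h U p q - h ^ 2 * iteratedDerivY 2 U p q
      - h ^ 4 / 12 * iteratedDerivY 4 U p q)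
    (fun _ _ => by ring) (fun _ _ => by ring) ?_ ?_ ?_ ?_ ?_ ?_
  · exact abs_secondDiff_iteratedDeriv_two_sub_le (f := fun p => U p y)
      (hU.uncurry_right y) hh.le fun ξ hξ => hB 6 0 rfl ξ hξ y hy
  · exact abs_secondDiff_iteratedDeriv_two_sub_le (f := U x)
      (hU.uncurry_left x) hh.le fun η hη => hB 0 6 rfl x hx η hη
  · refine abs_secondDiff_le (f := fun q => iteratedDerivX 4 U x q)
      (hX₄.uncurry_left x) hh.le fun η hη => ?_
    change |iteratedDerivY 2 (iteratedDerivX 4 U) x η| ≤ B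
    rw [hmixed]
    exact hB 4 2 rfl x hx η hη
  · exact abs_secondDiff_le (f := fun p => iteratedDerivY 4 U p y)
      (hY₄.uncurry_right y) hh.le fun ξ hξ => hB 2 4 rfl ξ hξ y hy
  · exact fun q hq => abs_secondDiff_sub_sub_le (f := fun p => U p q)
      (hU.uncurry_right q) hh.le fun ξ hξ => hB 6 0 rfl ξ hξ q hq
  · exact fun p hp => abs_secondDiff_sub_sub_le (f := U p)
      (hU.uncurry_left p) hh.le fun η hη => hB 0 6 rfl p hp η hη

end TruncationError

theorem two_dim_hocd_spatial_consistency_general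
    (a b c d T : ℝ) :
    ∀ B : ℝ, 0 ≤ B → ∃ C ≥ (0 : ℝ), ∀ u : ℝ → ℝ → ℝ → ℝ,
      (∀ t ∈ Set.Icc (0 : ℝ) T, ContDiff ℝ 6 (fun p : ℝ × ℝ => u p.1 p.2 t)) →
      (∀ x ∈ Set.Ioo a b, ∀ y ∈ Set.Ioo c d, ∀ t ∈ Set.Ioc (0 : ℝ) T,
        deriv (fun s => u x y s) t
          = iteratedDeriv 2 (fun p => u p y t) x + iteratedDeriv 2 (fun q => u x q t) y) →
      (∀ i j : ℕ, i + j ≤ 6 → ∀ x ∈ Set.Icc a b, ∀ y ∈ Set.Icc c d,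
        ∀ t ∈ Set.Icc (0 : ℝ) T,
          |iteratedDeriv i (fun p => iteratedDeriv j (fun q => u p q t) y) x| ≤ B) →
      ∀ h : ℝ, 0 < h → ∀ x y t : ℝ,
        a < x - h → x + h < b → c < y - h → y + h < d → t ∈ Set.Ioc (0 : ℝ) T →
          |((fun p q => deriv (fun s => u p q s) t) x y
                + (1 / 12) * deltaX h (fun p q => deriv (fun s => u p q s) t) x y
                + (1 / 12) * deltaY h (fun p q => deriv (fun s => u p q s) t) x y)
              - (1 / h ^ 2) * (deltaX h (fun p q => u p q t) x y
                  + (1 / 12) * deltaY h (deltaX h (fun p q => u p q t)) x y)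
              - (1 / h ^ 2) * (deltaY h (fun p q => u p q t) x y
                  + (1 / 12) * deltaX h (deltaY h (fun p q => u p q t)) x y)|
            ≤ C * h ^ 4 := by
  intro B hB
  refine ⟨B, hB, fun u hsmooth hheat hbound h hh x y t hax hxb hcy hyd ht => ?_⟩
  have ht' : t ∈ Icc 0 T := Ioc_subset_Icc_self ht
  have hxI : Icc (x - h) (x + h) ⊆ Ioo a b := Icc_subset_Ioo hax hxb
  have hyI : Icc (y - h) (y + h) ⊆ Ioo c d := Icc_subset_Ioo hcy hyd
  change |compactTruncationError h (fun p q => deriv (fun s => u p q s) t)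
    (fun p q => u p q t) x y| ≤ B * h ^ 4
  rw [compactTruncationError_congr hh.le fun p hp q hq => hheat p (hxI hp) q (hyI hq) t ht]
  exact abs_compactTruncationError_le (U := fun p q => u p q t) (hsmooth t ht') hh
    fun i j hij p hp q hq =>
      hbound i j hij.le p (Ioo_subset_Icc_self (hxI hp)) q (Ioo_subset_Icc_self (hyI hq)) t ht'

/-- The spatial consistency estimate (equation (3.11) of the paper) for the
two-dimensional high-order compact difference scheme: for a solution of the
two-dimensional heat equation with spatial derivatives of order up to 6
continuous and bounded (by `B`), the spatial truncation error
`(1 + δ²ₓ/12 + δ²ᵧ/12)(∂u/∂t) − h⁻²(1 + δ²ᵧ/12)δ²ₓu − h⁻²(1 + δ²ₓ/12)δ²ᵧu`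
is bounded by `C·h⁴` at every point whose `h`-neighborhood in space lies in
`Ω = (a,b) × (c,d)`, with `C` depending only on `B`. -/
theorem two_dim_hocd_spatial_consistency
    (a b c d T : ℝ) (hab : a < b) (hcd : c < d) (hT : 0 < T) :
    ∀ B : ℝ, 0 ≤ B → ∃ C ≥ (0 : ℝ), ∀ u : ℝ → ℝ → ℝ → ℝ,
      (∀ t ∈ Set.Icc (0 : ℝ) T, ContDiff ℝ 6 (fun p : ℝ × ℝ => u p.1 p.2 t)) →
      (∀ x ∈ Set.Ioo a b, ∀ y ∈ Set.Ioo c d, ∀ t ∈ Set.Ioc (0 : ℝ) T,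
        deriv (fun s => u x y s) t
          = iteratedDeriv 2 (fun p => u p y t) x + iteratedDeriv 2 (fun q => u x q t) y) →
      (∀ i j : ℕ, i + j ≤ 6 → ∀ x ∈ Set.Icc a b, ∀ y ∈ Set.Icc c d,
        ∀ t ∈ Set.Icc (0 : ℝ) T,
          |iteratedDeriv i (fun p => iteratedDeriv j (fun q => u p q t) y) x| ≤ B) →
      ∀ h : ℝ, 0 < h → ∀ x y t : ℝ,
        a < x - h → x + h < b → c < y - h → y + h < d → t ∈ Set.Ioc (0 : ℝ) T →
          |((fun p q => deriv (fun s => u p q s) t) x y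
                + (1 / 12) * deltaX h (fun p q => deriv (fun s => u p q s) t) x y
                + (1 / 12) * deltaY h (fun p q => deriv (fun s => u p q s) t) x y)
              - (1 / h ^ 2) * (deltaX h (fun p q => u p q t) x y
                  + (1 / 12) * deltaY h (deltaX h (fun p q => u p q t)) x y)
              - (1 / h ^ 2) * (deltaY h (fun p q => u p q t) x y
                  + (1 / 12) * deltaX h (deltaY h (fun p q => u p q t)) x y)|
            ≤ C * h ^ 4 :=
  two_dim_hocd_spatial_consistency_general a b c d T
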